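/- The tempered negativity of the two-qutrit state ω₃ := (1/2)(P₃ − Φ₃) equals 2, i.e. N_τ(ω₃) = 2; in particular the tempered logarithmic negativity E_N^τ(ω₃) = log₂ N_τ(ω₃) equals 1. -/

import Mathlib

open Matrix
open scoped ComplexOrder

section Defs

variable {ιA ιB : Type*}

def ptranspose (M : Matrix (ιA × ιB) (ιA × ιB) ℂ) : Matrix (ιA × ιB) (ιA × ιB) ℂ :=
  Matrix.of fun p q => M (p.1, q.2) (q.1, p.2)

def IsPPT [Fintype ιA] [Fintype ιB] (M : Matrix (ιA × ιB) (ιA × ιB) ℂ) : Prop :=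
  M.PosSemidef ∧ (ptranspose M).PosSemidef

def IsState {ι : Type*} [Fintype ι] (ρ : Matrix ι ι ℂ) : Prop :=
  ρ.PosSemidef ∧ ρ.trace = 1

def idTensor (ιR : Type*) (Φ : Matrix ιA ιA ℂ →ₗ[ℂ] Matrix ιB ιB ℂ) :
    Matrix (ιR × ιA) (ιR × ιA) ℂ →ₗ[ℂ] Matrix (ιR × ιB) (ιR × ιB) ℂ where
  toFun M := Matrix.of fun p q => Φ (Matrix.of fun a b => M (p.1, a) (q.1, b)) p.2 q.2
  map_add' M N := by
    funext p q
    show Φ ((Matrix.of fun a b => M (p.1, a) (q.1, b)) + (Matrix.of fun a b => N (p.1, a) (q.1, b))) p.2 q.2 = _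
    rw [map_add]
    rfl
  map_smul' c M := by
    funext p q
    show Φ (c • (Matrix.of fun a b => M (p.1, a) (q.1, b))) p.2 q.2 = _
    rw [_root_.map_smul]
    rfl

noncomputable def opNorm {ι : Type*} [Fintype ι] [DecidableEq ι] (M : Matrix ι ι ℂ) : ℝ :=
  ‖Matrix.toEuclideanCLM (𝕜 := ℂ) (n := ι) M‖

noncomputable def traceNorm {ι : Type*} [Fintype ι] [DecidableEq ι] (M : Matrix ι ι ℂ) : ℝ :=
  (((Matrix.posSemidef_conjTranspose_mul_self M).1.eigenvectorUnitary.1 *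
    diagonal (((↑) : ℝ → ℂ) ∘ Real.sqrt ∘ (Matrix.posSemidef_conjTranspose_mul_self M).1.eigenvalues) *
    (star (Matrix.posSemidef_conjTranspose_mul_self M).1.eigenvectorUnitary : Matrix ι ι ℂ)).trace).re

/-- The tempered negativity `N_τ(ρ|ω)`. -/
noncomputable def temperedNegRel [Fintype ιA] [Fintype ιB] [DecidableEq ιA] [DecidableEq ιB]
    (ρ ω : Matrix (ιA × ιB) (ιA × ιB) ℂ) : ℝ :=
  sSup {t : ℝ | ∃ X : Matrix (ιA × ιB) (ιA × ιB) ℂ, X.IsHermitian ∧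
    opNorm (ptranspose X) ≤ 1 ∧ opNorm X = ((X * ω).trace).re ∧ t = ((X * ρ).trace).re}

noncomputable def temperedNeg [Fintype ιA] [Fintype ιB] [DecidableEq ιA] [DecidableEq ιB]
    (ρ : Matrix (ιA × ιB) (ιA × ιB) ℂ) : ℝ :=
  temperedNegRel ρ ρ

/-- The tempered PPT robustness `R^τ(ρ|ω)`, via `1 + 2 R^τ(ρ|ω) = sup {...}`. -/
noncomputable def temperedRobRel [Fintype ιA] [Fintype ιB] [DecidableEq ιA] [DecidableEq ιB]
    (ρ ω : Matrix (ιA × ιB) (ιA × ιB) ℂ) : ℝ :=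
  (sSup {t : ℝ | ∃ X : Matrix (ιA × ιB) (ιA × ιB) ℂ, X.IsHermitian ∧
    (∀ W : Matrix (ιA × ιB) (ιA × ιB) ℂ, IsPPT W → |((X * W).trace).re| ≤ (W.trace).re) ∧
    opNorm X = ((X * ω).trace).re ∧ t = ((X * ρ).trace).re} - 1) / 2

noncomputable def temperedRob [Fintype ιA] [Fintype ιB] [DecidableEq ιA] [DecidableEq ιB]
    (ρ : Matrix (ιA × ιB) (ιA × ιB) ℂ) : ℝ :=
  temperedRobRel ρ ρ

/-- The channel tempered negativity. -/
noncomputable def chanTemperedNeg [Fintype ιA] [Fintype ιB] [DecidableEq ιA] [DecidableEq ιB]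
    (Λ : Matrix ιA ιA ℂ →ₗ[ℂ] Matrix ιB ιB ℂ) : ℝ :=
  sSup {t : ℝ | ∃ ρ : Matrix (ιA × ιA) (ιA × ιA) ℂ, IsState ρ ∧
    t = temperedNeg ((idTensor ιA Λ) ρ)}

/-- The channel tempered robustness `R^τ(Λ'|Λ)`. -/
noncomputable def chanTemperedRobRel [Fintype ιA] [Fintype ιB] [DecidableEq ιA] [DecidableEq ιB]
    (Λ' Λ : Matrix ιA ιA ℂ →ₗ[ℂ] Matrix ιB ιB ℂ) : ℝ :=
  sSup {t : ℝ | ∃ ρ : Matrix (ιA × ιA) (ιA × ιA) ℂ, IsState ρ ∧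
    t = temperedRobRel ((idTensor ιA Λ') ρ) ((idTensor ιA Λ) ρ)}

/-- The diamond norm. -/
noncomputable def diamondNorm [Fintype ιA] [Fintype ιB] [DecidableEq ιA] [DecidableEq ιB]
    (Φ : Matrix ιA ιA ℂ →ₗ[ℂ] Matrix ιB ιB ℂ) : ℝ :=
  sSup {t : ℝ | ∃ ρ : Matrix (ιA × ιA) (ιA × ιA) ℂ, IsState ρ ∧
    t = traceNorm ((idTensor ιA Φ) ρ)}

/-- The `n`-fold tensor power of a linear map on matrices. -/
noncomputable def tensorPow [Fintype ιA] [DecidableEq ιA] (n : ℕ)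
    (Λ : Matrix ιA ιA ℂ →ₗ[ℂ] Matrix ιB ιB ℂ) :
    Matrix (Fin n → ιA) (Fin n → ιA) ℂ →ₗ[ℂ] Matrix (Fin n → ιB) (Fin n → ιB) ℂ where
  toFun M := Matrix.of fun p q => ∑ a : Fin n → ιA, ∑ b : Fin n → ιA,
      M a b * ∏ i, Λ (Matrix.single (a i) (b i) 1) (p i) (q i)
  map_add' M N := by
    funext p q
    simp [Matrix.add_apply, add_mul, Finset.sum_add_distrib]
  map_smul' c M := by
    funext p q
    simp [Matrix.smul_apply, Finset.mul_sum, mul_assoc]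

/-- The `n`-fold tensor power of a bipartite state, regarded as bipartite across the `Aⁿ:Bⁿ` cut. -/
noncomputable def statePow (n : ℕ) (ρ : Matrix (ιA × ιB) (ιA × ιB) ℂ) :
    Matrix ((Fin n → ιA) × (Fin n → ιB)) ((Fin n → ιA) × (Fin n → ιB)) ℂ :=
  Matrix.of fun p q => ∏ i, ρ (p.1 i, p.2 i) (q.1 i, q.2 i)

/-- The Choi matrix `J_Φ = (1/d_A) ∑_{ij} |i⟩⟨j| ⊗ Φ(|i⟩⟨j|)`. -/
noncomputable def choi [Fintype ιA] [DecidableEq ιA]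
    (Φ : Matrix ιA ιA ℂ →ₗ[ℂ] Matrix ιB ιB ℂ) : Matrix (ιA × ιB) (ιA × ιB) ℂ :=
  Matrix.of fun p q => (Fintype.card ιA : ℂ)⁻¹ * Φ (Matrix.single p.1 q.1 1) p.2 q.2


/-- Complete positivity. -/
def IsCP [Fintype ιA] [Fintype ιB] (Φ : Matrix ιA ιA ℂ →ₗ[ℂ] Matrix ιB ιB ℂ) : Prop :=
  ∀ (k : ℕ) (X : Matrix (Fin k × ιA) (Fin k × ιA) ℂ), X.PosSemidef →
    ((idTensor (Fin k) Φ) X).PosSemidef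

/-- Trace preservation. -/
def IsTP [Fintype ιA] [Fintype ιB] (Φ : Matrix ιA ιA ℂ →ₗ[ℂ] Matrix ιB ιB ℂ) : Prop :=
  ∀ X : Matrix ιA ιA ℂ, (Φ X).trace = X.trace

/-- A quantum channel: completely positive and trace preserving. -/
def IsChannel [Fintype ιA] [Fintype ιB] (Φ : Matrix ιA ιA ℂ →ₗ[ℂ] Matrix ιB ιB ℂ) : Prop :=
  IsCP Φ ∧ IsTP Φ

/-- A map is PPT-binding if `id_k ⊗ Φ` sends positive semidefinite matrices to PPT matrices. -/
def PPTBinding [Fintype ιA] [Fintype ιB] (Φ : Matrix ιA ιA ℂ →ₗ[ℂ] Matrix ιB ιB ℂ) : Prop :=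
  ∀ (k : ℕ) (X : Matrix (Fin k × ιA) (Fin k × ιA) ℂ), X.PosSemidef →
    IsPPT ((idTensor (Fin k) Φ) X)

/-- A PPT-binding channel. -/
def PPTBindingChannel [Fintype ιA] [Fintype ιB] (Φ : Matrix ιA ιA ℂ →ₗ[ℂ] Matrix ιB ιB ℂ) : Prop :=
  IsChannel Φ ∧ PPTBinding Φ

/-- The channel robustness with respect to PPT-binding channels. -/
noncomputable def RKE [Fintype ιA] [Fintype ιB] (Λ : Matrix ιA ιA ℂ →ₗ[ℂ] Matrix ιB ιB ℂ) : ℝ :=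
  sInf {l : ℝ | 0 ≤ l ∧ ∃ Γ Θ : Matrix ιA ιA ℂ →ₗ[ℂ] Matrix ιB ιB ℂ,
    PPTBindingChannel Γ ∧ PPTBindingChannel Θ ∧ Λ + (l : ℂ) • Γ = ((1 + l : ℝ) : ℂ) • Θ}

/-- The PPT robustness of a state. -/
noncomputable def RPPT [Fintype ιA] [Fintype ιB] (ρ : Matrix (ιA × ιB) (ιA × ιB) ℂ) : ℝ :=
  sInf {t : ℝ | ∃ δ : Matrix (ιA × ιB) (ιA × ιB) ℂ, IsPPT δ ∧ IsPPT (ρ + δ) ∧ (δ.trace).re = t}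


end Defs

/-- The projector `P₃ = ∑ᵢ |ii⟩⟨ii|` onto the maximally correlated subspace of `ℂ³ ⊗ ℂ³`. -/
noncomputable def P3 : Matrix (Fin 3 × Fin 3) (Fin 3 × Fin 3) ℂ :=
  Matrix.of fun p q => if p.1 = p.2 ∧ q.1 = q.2 ∧ p.1 = q.1 then 1 else 0

/-- The maximally entangled two-qutrit state `Φ₃ = |Φ₃⟩⟨Φ₃|`, `|Φ₃⟩ = (1/√3) ∑ᵢ |ii⟩`. -/
noncomputable def Phi3 : Matrix (Fin 3 × Fin 3) (Fin 3 × Fin 3) ℂ :=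
  Matrix.of fun p q => if p.1 = p.2 ∧ q.1 = q.2 then 1 / 3 else 0

/-- The two-qutrit state `ω₃ = (1/2)(P₃ − Φ₃)`. -/
noncomputable def omega3 : Matrix (Fin 3 × Fin 3) (Fin 3 × Fin 3) ℂ :=
  (1 / 2 : ℂ) • (P3 - Phi3)

/-!
Only the entries `X_{ii,kk}` enter `Tr(X ω₃) = ½ ∑ᵢ X_{ii,ii} - ⅙ ∑ᵢₖ X_{ii,kk}`, and
`X_{ii,kk} = (X^Γ)_{ik,ki}` has modulus at most `‖X^Γ‖_∞ ≤ 1`. The three diagonal terms carry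
weight `1/3` and the six others `1/6`, so `Tr(X ω₃) ≤ 2`: this is the Hölder bound with
`‖ω₃^Γ‖₁ = 2` made explicit. The witness `X = 2P₃ - 3Φ₃` attains it: `X^Γ` sends `v` to
`±v ∘ swap`, an isometry, and on `span {|ii⟩}` the matrix `X` acts as `2 - J` (`J` the all-ones
matrix), whose norm is `2 = Tr(X ω₃)`.
-/

section OperatorNorm

variable {ι : Type*} [Fintype ι] [DecidableEq ι]

lemma norm_apply_le_opNorm (M : Matrix ι ι ℂ) (p q : ι) : ‖M p q‖ ≤ opNorm M := by
  have hentry : M p q = inner ℂ (EuclideanSpace.single p (1 : ℂ))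
      (Matrix.toEuclideanCLM (𝕜 := ℂ) M (EuclideanSpace.single q 1)) := by
    rw [EuclideanSpace.inner_single_left]
    simp [EuclideanSpace.single]
  calc ‖M p q‖ ≤ ‖EuclideanSpace.single p (1 : ℂ)‖ *
        ‖Matrix.toEuclideanCLM (𝕜 := ℂ) M (EuclideanSpace.single q 1)‖ :=
        hentry ▸ norm_inner_le_norm _ _
    _ ≤ 1 * (opNorm M * ‖EuclideanSpace.single q (1 : ℂ)‖) := by
        rw [PiLp.norm_single, norm_one]
        gcongr
        exact ContinuousLinearMap.le_opNorm _ _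
    _ = opNorm M := by rw [PiLp.norm_single, norm_one, one_mul, mul_one]

lemma opNorm_le_of_sum_norm_sq_mulVec_le {c : ℝ} (hc : 0 ≤ c) (M : Matrix ι ι ℂ)
    (h : ∀ v : ι → ℂ, ∑ p, ‖(M *ᵥ v) p‖ ^ 2 ≤ c ^ 2 * ∑ p, ‖v p‖ ^ 2) :
    opNorm M ≤ c := by
  refine ContinuousLinearMap.opNorm_le_bound _ hc fun w => ?_
  rw [← sq_le_sq₀ (norm_nonneg _) (by positivity), mul_pow, EuclideanSpace.norm_sq_eq,
    EuclideanSpace.norm_sq_eq]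
  exact h w.ofLp

lemma le_opNorm_of_mulVec_eq_smul {M : Matrix ι ι ℂ} {v : ι → ℂ} {c : ℂ} (hv : v ≠ 0)
    (h : M *ᵥ v = c • v) : ‖c‖ ≤ opNorm M := by
  have hw : 0 < ‖WithLp.toLp 2 v‖ := norm_pos_iff.2 (by simpa using hv)
  refine le_of_mul_le_mul_right ?_ hw
  calc ‖c‖ * ‖WithLp.toLp 2 v‖ = ‖Matrix.toEuclideanCLM (𝕜 := ℂ) M (WithLp.toLp 2 v)‖ := by
        rw [Matrix.toEuclideanCLM_toLp, h, WithLp.toLp_smul, norm_smul]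
    _ ≤ opNorm M * ‖WithLp.toLp 2 v‖ := ContinuousLinearMap.le_opNorm _ _

end OperatorNorm

lemma temperedNegRel_eq_of_forall_le {ιA ιB : Type*} [Fintype ιA] [Fintype ιB]
    [DecidableEq ιA] [DecidableEq ιB] {ρ ω X : Matrix (ιA × ιB) (ιA × ιB) ℂ}
    (hX : X.IsHermitian) (hXΓ : opNorm (ptranspose X) ≤ 1)
    (hXω : opNorm X = ((X * ω).trace).re)
    (hmax : ∀ Y : Matrix (ιA × ιB) (ιA × ιB) ℂ, Y.IsHermitian → opNorm (ptranspose Y) ≤ 1 →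
      opNorm Y = ((Y * ω).trace).re → ((Y * ρ).trace).re ≤ ((X * ρ).trace).re) :
    temperedNegRel ρ ω = ((X * ρ).trace).re := by
  refine IsGreatest.csSup_eq ⟨⟨X, hX, hXΓ, hXω, rfl⟩, ?_⟩
  rintro t ⟨Y, hY, hYΓ, hYω, rfl⟩
  exact hmax Y hY hYΓ hYω

lemma trace_mul_omega3 (X : Matrix (Fin 3 × Fin 3) (Fin 3 × Fin 3) ℂ) :
    (X * omega3).trace =
      (1 / 2) * ∑ i, X (i, i) (i, i) - (1 / 6) * ∑ i, ∑ k, X (i, i) (k, k) := by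
  simp only [omega3, P3, Phi3, Matrix.trace, Matrix.diag, Matrix.mul_apply, Matrix.smul_apply,
    Matrix.sub_apply, Matrix.of_apply, Fintype.sum_prod_type, Fin.sum_univ_three]
  norm_num [Fin.ext_iff]
  ring

lemma re_trace_mul_omega3_le {X : Matrix (Fin 3 × Fin 3) (Fin 3 × Fin 3) ℂ}
    (hX : opNorm (ptranspose X) ≤ 1) : ((X * omega3).trace).re ≤ 2 := by
  have h : ∀ i k : Fin 3, -1 ≤ (X (i, i) (k, k)).re ∧ (X (i, i) (k, k)).re ≤ 1 := fun i k =>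
    abs_le.1 <| (Complex.abs_re_le_norm _).trans <|
      (norm_apply_le_opNorm (ptranspose X) (i, k) (k, i)).trans hX
  rw [trace_mul_omega3]
  simp only [Fin.sum_univ_three, Complex.sub_re, Complex.add_re, Complex.mul_re]
  norm_num
  linarith [h 0 0, h 1 1, h 2 2, h 0 1, h 1 0, h 0 2, h 2 0, h 1 2, h 2 1]

noncomputable def omega3Witness : Matrix (Fin 3 × Fin 3) (Fin 3 × Fin 3) ℂ :=
  (2 : ℂ) • P3 - (3 : ℂ) • Phi3

lemma omega3Witness_apply (i j k l : Fin 3) :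
    omega3Witness (i, j) (k, l) = if i = j ∧ k = l then (if i = k then 1 else -1) else 0 := by
  simp only [omega3Witness, P3, Phi3, Matrix.sub_apply, Matrix.smul_apply, Matrix.of_apply,
    smul_eq_mul]
  split_ifs <;> norm_num <;> grind

lemma omega3Witness_isHermitian : omega3Witness.IsHermitian :=
  Matrix.IsHermitian.ext fun ⟨i, j⟩ ⟨k, l⟩ => by
    simp only [omega3Witness_apply]
    split_ifs <;> simp <;> grind

lemma omega3Witness_mulVec (v : Fin 3 × Fin 3 → ℂ) (i j : Fin 3) :
    (omega3Witness *ᵥ v) (i, j) = if i = j then 2 * v (i, i) - ∑ k, v (k, k) else 0 := by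
  simp only [Matrix.mulVec, dotProduct, Fintype.sum_prod_type, omega3Witness_apply]
  split_ifs with hij
  · subst hij
    simp only [true_and, ite_mul, zero_mul, Finset.sum_ite_eq, Finset.mem_univ, if_true]
    fin_cases i <;> simp [Fin.sum_univ_three] <;> ring
  · simp [hij]

lemma ptranspose_omega3Witness_mulVec (v : Fin 3 × Fin 3 → ℂ) (i j : Fin 3) :
    (ptranspose omega3Witness *ᵥ v) (i, j) = if i = j then v (i, i) else -v (j, i) := by
  simp only [Matrix.mulVec, dotProduct, ptranspose, Matrix.of_apply, omega3Witness_apply,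
    Fintype.sum_prod_type, ite_and, ite_mul, zero_mul, Finset.sum_ite_eq, Finset.sum_ite_eq',
    Finset.mem_univ, if_true]
  split_ifs <;> simp_all

lemma opNorm_ptranspose_omega3Witness_le : opNorm (ptranspose omega3Witness) ≤ 1 := by
  refine opNorm_le_of_sum_norm_sq_mulVec_le zero_le_one _ fun v => le_of_eq ?_
  calc ∑ p, ‖(ptranspose omega3Witness *ᵥ v) p‖ ^ 2 = ∑ p : Fin 3 × Fin 3, ‖v p.swap‖ ^ 2 := by
        refine Fintype.sum_congr _ _ fun ⟨i, j⟩ => ?_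
        rw [ptranspose_omega3Witness_mulVec]
        split_ifs with hij
        · rw [hij, Prod.swap_prod_mk]
        · rw [norm_neg, Prod.swap_prod_mk]
    _ = 1 ^ 2 * ∑ p, ‖v p‖ ^ 2 := by
        rw [one_pow, one_mul]
        exact Fintype.sum_equiv (Equiv.prodComm _ _) _ _ fun _ => rfl

lemma sum_norm_sq_two_mul_sub_sum (a : Fin 3 → ℂ) :
    ∑ i, ‖2 * a i - ∑ k, a k‖ ^ 2 + ‖∑ k, a k‖ ^ 2 = 4 * ∑ i, ‖a i‖ ^ 2 := by
  simp only [Fin.sum_univ_three, Complex.sq_norm, Complex.normSq_apply, Complex.sub_re,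
    Complex.sub_im, Complex.add_re, Complex.add_im, Complex.mul_re, Complex.mul_im,
    Complex.re_ofNat, Complex.im_ofNat]
  ring

lemma opNorm_omega3Witness_le : opNorm omega3Witness ≤ 2 := by
  refine opNorm_le_of_sum_norm_sq_mulVec_le zero_le_two _ fun v => ?_
  have hrows : ∑ p, ‖(omega3Witness *ᵥ v) p‖ ^ 2 = ∑ i, ‖2 * v (i, i) - ∑ k, v (k, k)‖ ^ 2 := by
    rw [Fintype.sum_prod_type]
    refine Fintype.sum_congr _ _ fun i => ?_
    simp only [omega3Witness_mulVec]
    rw [Finset.sum_eq_single i (fun j _ hji => by simp [Ne.symm hji]) (by simp)]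
    simp
  have hdiag : ∑ i, ‖v (i, i)‖ ^ 2 ≤ ∑ p, ‖v p‖ ^ 2 := by
    rw [Fintype.sum_prod_type]
    exact Finset.sum_le_sum fun i _ => Finset.single_le_sum (f := fun j => ‖v (i, j)‖ ^ 2)
      (fun _ _ => by positivity) (Finset.mem_univ i)
  have hid := sum_norm_sq_two_mul_sub_sum fun i => v (i, i)
  rw [hrows]
  linarith [sq_nonneg ‖∑ k, v (k, k)‖]

lemma omega3Witness_mulVec_eigenvector :
    omega3Witness *ᵥ (Pi.single (0, 0) 1 - Pi.single (1, 1) 1) =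
      (2 : ℂ) • (Pi.single (0, 0) 1 - Pi.single (1, 1) 1) := by
  funext ⟨i, j⟩
  rw [omega3Witness_mulVec]
  fin_cases i <;> fin_cases j <;> simp [Fin.sum_univ_three]

lemma opNorm_omega3Witness : opNorm omega3Witness = 2 := by
  refine le_antisymm opNorm_omega3Witness_le ?_
  have hv : (Pi.single (0, 0) 1 - Pi.single (1, 1) 1 : Fin 3 × Fin 3 → ℂ) ≠ 0 := fun h => by
    simpa using congrFun h (0, 0)
  simpa using le_opNorm_of_mulVec_eq_smul hv omega3Witness_mulVec_eigenvector

lemma re_trace_omega3Witness_mul_omega3 : ((omega3Witness * omega3).trace).re = 2 := by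
  rw [trace_mul_omega3]
  simp only [omega3Witness_apply, and_self, if_true, Fin.sum_univ_three]
  norm_num [Fin.ext_iff]

/-- **The tempered negativity of `ω₃` equals 2**, hence its tempered logarithmic
negativity equals 1. -/
theorem temperedNeg_omega3 :
    temperedNeg omega3 = 2 ∧ Real.logb 2 (temperedNeg omega3) = 1 := by
  have hN : temperedNeg omega3 = 2 := by
    rw [temperedNeg, ← re_trace_omega3Witness_mul_omega3]
    refine temperedNegRel_eq_of_forall_le omega3Witness_isHermitian
      opNorm_ptranspose_omega3Witness_le ?_ fun Y _ hY _ => ?_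
    · rw [opNorm_omega3Witness, re_trace_omega3Witness_mul_omega3]
    · rw [re_trace_omega3Witness_mul_omega3]
      exact re_trace_mul_omega3_le hY
  exact ⟨hN, by rw [hN, Real.logb_self_eq_one one_lt_two]⟩
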